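/- arXiv:1602.03292 — 2 statements merged into one kernel-verified Lean document; each statement's English description precedes it below -/
import Mathlib

section
/- For all integers n ≥ 1 and 1 ≤ m ≤ n, the residue of G_n(x)/(x(x−1)) at the simple pole x = 2m is given by ( ∏_{k=1}^{n} (2m+2k−1) ) / ( 2m(2m−1) ∏_{k∈{1,…,n}, k≠m} (2m−2k) ) = (−1)^{n−m} A_{nm}. -/
open Filter Topology

/-- `G n x := ∏_{m=1}^{n} (x+2m−1)/(x−2m)`. -/
noncomputable def G (n : ℕ) (x : ℂ) : ℂ :=
  ∏ m ∈ Finset.Icc 1 n, (x + 2 * (m : ℂ) - 1) / (x - 2 * (m : ℂ))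

/-- `A n m` is the coefficient
`A_{nm} := 2^{−2n}/(2m−1) · C(2(n+m), n+m) · C(n+m, 2m)`. -/
noncomputable def A (n m : ℕ) : ℝ :=
  (2 : ℝ) ^ (-(2 * n : ℤ)) / (2 * (m : ℝ) - 1) * (Nat.choose (2 * (n + m)) (n + m)) *
    (Nat.choose (n + m) (2 * m))

section GResidueAux
open Finset
lemma prodA (m n : ℕ) :
    ((2*m).factorial : ℂ) * 2^n * ((m+n).factorial : ℂ) *
      ∏ k ∈ Finset.Icc 1 n, (2*(m:ℂ) + 2*(k:ℂ) - 1)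
    = ((2*(m+n)).factorial : ℂ) * (m.factorial : ℂ) := by
  induction n with
  | zero => simp
  | succ n ih =>
    rw [Finset.prod_Icc_succ_top (by omega : 1 ≤ n+1)]
    have h1 : 2*(m+(n+1)) = (2*(m+n)+1) + 1 := by omega
    have h2 : m + (n+1) = (m+n)+1 := by omega
    rw [h1, h2, Nat.factorial_succ ((2*(m+n))+1), Nat.factorial_succ (2*(m+n)), Nat.factorial_succ (m+n)]
    push_cast
    linear_combination (2*(m:ℂ)+2*(n:ℂ)+1)*(2*(m:ℂ)+2*(n:ℂ)+2) * ih

lemma prodB (a : ℕ) : ∏ k ∈ Finset.Icc 1 a, (2*(a:ℂ) + 2 - 2*(k:ℂ)) = 2^a * (a.factorial : ℂ) := by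
  have h : ∏ k ∈ Finset.Icc 1 a, (2*(a:ℂ) + 2 - 2*(k:ℂ)) = ∏ k ∈ Finset.Icc 1 a, (2*(k:ℂ)) := by
    apply Finset.prod_nbij' (fun k => a+1-k) (fun k => a+1-k)
    · intro x hx; simp only [Finset.mem_Icc] at *; omega
    · intro x hx; simp only [Finset.mem_Icc] at *; omega
    · intro x hx; simp only [Finset.mem_Icc] at *; omega
    · intro x hx; simp only [Finset.mem_Icc] at *; omega
    · intro x hx
      simp only [Finset.mem_Icc] at hx
      have : ((a+1-x : ℕ) : ℂ) = (a:ℂ) + 1 - (x:ℂ) := by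
        push_cast [Nat.cast_sub (by omega : x ≤ a+1)]; ring
      rw [this]; ring
  rw [h, Finset.prod_mul_distrib, Finset.prod_const]
  have : ∏ k ∈ Finset.Icc 1 a, (k:ℂ) = (a.factorial : ℂ) := by
    rw [← Nat.cast_prod]
    norm_cast
    rw [← Finset.Ico_add_one_right_eq_Icc, Finset.prod_Ico_id_eq_factorial]
  rw [this]
  simp [Nat.card_Icc]

lemma prodC (m : ℕ) (hm1 : 1 ≤ m) : ∀ n, m ≤ n →
    2 * ∏ k ∈ (Finset.Icc 1 n).erase m, (2*(m:ℂ) - 2*(k:ℂ))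
      = (-1)^(n-m) * 2^n * ((m-1).factorial : ℂ) * ((n-m).factorial : ℂ) := by
  refine Nat.le_induction ?_ ?_
  · -- base n = m
    have he : (Finset.Icc 1 m).erase m = Finset.Icc 1 (m-1) := by
      ext k; simp [Finset.mem_erase]; omega
    rw [he]
    have : ∏ k ∈ Finset.Icc 1 (m-1), (2*(m:ℂ) - 2*(k:ℂ))
        = ∏ k ∈ Finset.Icc 1 (m-1), (2*((m-1:ℕ):ℂ) + 2 - 2*(k:ℂ)) := by
      apply Finset.prod_congr rfl
      intro k _
      push_cast [Nat.cast_sub hm1]; ring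
    rw [this, prodB, Nat.sub_self]
    rw [show m = (m-1)+1 by omega]
    simp [pow_succ]
    ring
  · intro n hn ih
    have hne : (n+1) ∉ (Finset.Icc 1 n).erase m := by simp
    have he : (Finset.Icc 1 (n+1)).erase m = insert (n+1) ((Finset.Icc 1 n).erase m) := by
      ext k; simp [Finset.mem_erase, Finset.mem_insert]; omega
    rw [he, Finset.prod_insert hne]
    have h2 : (n+1) - m = (n-m) + 1 := by omega
    rw [h2, Nat.factorial_succ]
    push_cast [Nat.cast_sub hn]
    rw [pow_succ, pow_succ]
    linear_combination (-2*((n:ℂ)-(m:ℂ)+1)) * ih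

lemma keyEq (n m : ℕ) (hn : 1 ≤ n) (hm1 : 1 ≤ m) (hmn : m ≤ n) :
    (∏ k ∈ Finset.Icc 1 n, (2 * (m : ℂ) + 2 * (k : ℂ) - 1)) /
        (2 * (m : ℂ) * (2 * (m : ℂ) - 1) *
          ∏ k ∈ (Finset.Icc 1 n).erase m, (2 * (m : ℂ) - 2 * (k : ℂ)))
      = (-1 : ℂ) ^ (n - m) * (A n m : ℂ) := by
  have hcomm : m + n = n + m := by omega
  have hP := prodA m n
  rw [hcomm] at hP
  have hQ := prodC m hm1 n hmn
  -- nonzero facts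
  have hf1 : ((2*m).factorial : ℂ) ≠ 0 := Nat.cast_ne_zero.mpr (Nat.factorial_ne_zero _)
  have hf2 : (((n+m)).factorial : ℂ) ≠ 0 := Nat.cast_ne_zero.mpr (Nat.factorial_ne_zero _)
  have hf5 : (((m-1)).factorial : ℂ) ≠ 0 := Nat.cast_ne_zero.mpr (Nat.factorial_ne_zero _)
  have hf6 : (((n-m)).factorial : ℂ) ≠ 0 := Nat.cast_ne_zero.mpr (Nat.factorial_ne_zero _)
  have h2n : (2:ℂ)^n ≠ 0 := pow_ne_zero _ two_ne_zero
  have hm0 : (m:ℂ) ≠ 0 := Nat.cast_ne_zero.mpr (by omega)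
  have hs : ((-1:ℂ))^(n-m) ≠ 0 := by
    apply pow_ne_zero; norm_num
  have h2m1 : (2*(m:ℂ) - 1) ≠ 0 := by
    have : ((2*m : ℕ) : ℂ) ≠ ((1:ℕ):ℂ) := by
      intro h; exact absurd (Nat.cast_injective h) (by omega)
    push_cast at this
    intro h; apply this; linear_combination h
  have hc1 : ((2*(n+m)).choose (n+m) : ℂ) * ((n+m).factorial : ℂ) * ((n+m).factorial : ℂ)
      = ((2*(n+m)).factorial : ℂ) := by
    have := Nat.choose_mul_factorial_mul_factorial (show n+m ≤ 2*(n+m) by omega)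
    rw [show 2*(n+m) - (n+m) = n+m by omega] at this
    exact_mod_cast this
  have hc2 : ((n+m).choose (2*m) : ℂ) * ((2*m).factorial : ℂ) * ((n-m).factorial : ℂ)
      = ((n+m).factorial : ℂ) := by
    have := Nat.choose_mul_factorial_mul_factorial (show 2*m ≤ n+m by omega)
    rw [show (n+m) - 2*m = n-m by omega] at this
    exact_mod_cast this
  have hfm : (m.factorial : ℂ) = (m : ℂ) * ((m-1).factorial : ℂ) := by
    have h := Nat.factorial_succ (m-1)
    rw [Nat.sub_add_cancel hm1] at h
    exact_mod_cast h
  have hA : (A n m : ℂ) = ((2:ℂ)^(2*n))⁻¹ / (2*(m:ℂ)-1) *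
      ((2*(n+m)).choose (n+m) : ℂ) * ((n+m).choose (2*m) : ℂ) := by
    unfold A
    push_cast
    rw [zpow_neg]
    norm_cast
  -- explicit values
  have hP1 : (∏ k ∈ Finset.Icc 1 n, (2 * (m : ℂ) + 2 * (k : ℂ) - 1))
      = (((2*(n+m)).factorial : ℂ) * (m.factorial : ℂ)) /
        (((2*m).factorial : ℂ) * 2^n * ((n+m).factorial : ℂ)) := by
    rw [eq_div_iff (by simp [hf1, hf2, h2n])]
    linear_combination hP
  have hQ1 : (∏ k ∈ (Finset.Icc 1 n).erase m, (2 * (m : ℂ) - 2 * (k : ℂ)))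
      = ((-1:ℂ)^(n-m) * 2^n * ((m-1).factorial : ℂ) * ((n-m).factorial : ℂ)) / 2 := by
    rw [eq_div_iff (two_ne_zero)]
    linear_combination hQ
  have hch2 : ((n+m).choose (2*m) : ℂ) ≠ 0 :=
    Nat.cast_ne_zero.mpr (Nat.choose_pos (by omega)).ne'
  rw [hP1, hQ1, hA, ← hc1, ← hc2, hfm]
  rw [div_div]
  rw [div_eq_iff (by
    refine mul_ne_zero (mul_ne_zero (mul_ne_zero hf1 h2n) ?_) ?_
    · exact mul_ne_zero (mul_ne_zero hch2 hf1) hf6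
    · refine mul_ne_zero (mul_ne_zero (by simpa using hm0) h2m1) ?_
      exact div_ne_zero (mul_ne_zero (mul_ne_zero (mul_ne_zero hs h2n) hf5) hf6) two_ne_zero)]
  field_simp
  have hsq : ((-1:ℂ)^(n-m))^2 = 1 := by
    rw [← pow_mul, mul_comm, pow_mul]; norm_num
  ring_nf
  simp [pow_mul, hsq]
  have h2m1' : (-1 + (m:ℂ)*2) ≠ 0 := by
    intro h; apply h2m1; linear_combination h
  field_simp
  ring

lemma part1 (n m : ℕ) (hn : 1 ≤ n) (hm1 : 1 ≤ m) (hmn : m ≤ n) :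
    Filter.Tendsto (fun x : ℂ => (x - 2 * (m : ℂ)) * G n x / (x * (x - 1)))
        (nhdsWithin (2 * (m : ℂ)) {(2 * (m : ℂ))}ᶜ)
        (nhds ((∏ k ∈ Finset.Icc 1 n, (2 * (m : ℂ) + 2 * (k : ℂ) - 1)) /
          (2 * (m : ℂ) * (2 * (m : ℂ) - 1) *
            ∏ k ∈ (Finset.Icc 1 n).erase m, (2 * (m : ℂ) - 2 * (k : ℂ))))) := by
  have hmem : m ∈ Finset.Icc 1 n := by simp; omega
  set F : ℂ → ℂ := fun x =>
    (∏ k ∈ Finset.Icc 1 n, (x + 2 * (k : ℂ) - 1)) /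
      (x * (x - 1) * ∏ k ∈ (Finset.Icc 1 n).erase m, (x - 2 * (k : ℂ))) with hF
  have key : ∀ x : ℂ, x ≠ 2 * (m : ℂ) →
      (x - 2 * (m : ℂ)) * G n x / (x * (x - 1)) = F x := by
    intro x hx
    have hx' : x - 2 * (m : ℂ) ≠ 0 := sub_ne_zero.mpr hx
    rw [hF, G, Finset.prod_div_distrib,
      ← Finset.mul_prod_erase (Finset.Icc 1 n) (fun k => x - 2 * (k : ℂ)) hmem]
    rw [mul_div_assoc', mul_div_mul_left _ _ hx', div_div,
      mul_comm (∏ k ∈ (Finset.Icc 1 n).erase m, (x - 2 * (k : ℂ))) (x*(x-1))]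
  have hcont : Filter.Tendsto F (nhdsWithin (2 * (m : ℂ)) {(2 * (m : ℂ))}ᶜ)
      (nhds (F (2 * (m : ℂ)))) := by
    have hnum : Continuous fun x : ℂ => ∏ k ∈ Finset.Icc 1 n, (x + 2 * (k : ℂ) - 1) :=
      continuous_finset_prod _ (fun k _ => by continuity)
    have hden : Continuous fun x : ℂ =>
        x * (x - 1) * ∏ k ∈ (Finset.Icc 1 n).erase m, (x - 2 * (k : ℂ)) := by
      exact ((continuous_id.mul (continuous_id.sub continuous_const)).mul
        (continuous_finset_prod _ (fun k _ => by continuity)))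
    have hne : (2 * (m : ℂ)) * (2 * (m : ℂ) - 1) *
        ∏ k ∈ (Finset.Icc 1 n).erase m, (2 * (m : ℂ) - 2 * (k : ℂ)) ≠ 0 := by
      refine mul_ne_zero (mul_ne_zero ?_ ?_) ?_
      · simp; omega
      · intro h
        have : ((2*m : ℕ) : ℂ) = ((1:ℕ) : ℂ) := by push_cast; linear_combination h
        exact absurd (Nat.cast_injective this) (by omega)
      · rw [Finset.prod_ne_zero_iff]
        intro k hk
        simp only [Finset.mem_erase] at hk
        intro h
        have : ((2*m : ℕ) : ℂ) = ((2*k : ℕ) : ℂ) := by push_cast; linear_combination h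
        exact absurd (Nat.cast_injective this) (by omega)
    have := (hnum.continuousAt.div hden.continuousAt hne).tendsto
    exact this.mono_left nhdsWithin_le_nhds
  have heq : F (2 * (m : ℂ)) =
      (∏ k ∈ Finset.Icc 1 n, (2 * (m : ℂ) + 2 * (k : ℂ) - 1)) /
        (2 * (m : ℂ) * (2 * (m : ℂ) - 1) *
          ∏ k ∈ (Finset.Icc 1 n).erase m, (2 * (m : ℂ) - 2 * (k : ℂ))) := rfl
  rw [← heq]
  refine hcont.congr' ?_
  filter_upwards [self_mem_nhdsWithin] with x hx
  exact (key x hx).symm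
end GResidueAux

/-- For `1 ≤ m ≤ n`, the residue of `G_n(x)/(x(x−1))` at the simple pole `x = 2m`, i.e.
the limit of `(x − 2m) G_n(x)/(x(x−1))` as `x → 2m`, equals
`(∏_{k=1}^{n} (2m+2k−1)) / (2m(2m−1) ∏_{k≠m} (2m−2k)) = (−1)^{n−m} A_{nm}`. -/
theorem G_residue (n m : ℕ) (hn : 1 ≤ n) (hm1 : 1 ≤ m) (hmn : m ≤ n) :
    Filter.Tendsto (fun x : ℂ => (x - 2 * (m : ℂ)) * G n x / (x * (x - 1)))
        (nhdsWithin (2 * (m : ℂ)) {(2 * (m : ℂ))}ᶜ)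
        (nhds ((∏ k ∈ Finset.Icc 1 n, (2 * (m : ℂ) + 2 * (k : ℂ) - 1)) /
          (2 * (m : ℂ) * (2 * (m : ℂ) - 1) *
            ∏ k ∈ (Finset.Icc 1 n).erase m, (2 * (m : ℂ) - 2 * (k : ℂ)))))
    ∧ (∏ k ∈ Finset.Icc 1 n, (2 * (m : ℂ) + 2 * (k : ℂ) - 1)) /
        (2 * (m : ℂ) * (2 * (m : ℂ) - 1) *
          ∏ k ∈ (Finset.Icc 1 n).erase m, (2 * (m : ℂ) - 2 * (k : ℂ)))
      = (-1 : ℂ) ^ (n - m) * (A n m : ℂ) := by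
  exact ⟨part1 n m hn hm1 hmn, keyEq n m hn hm1 hmn⟩
end

section
/- For every fixed complex number x that is not an integer, (−1)^n G_n(x) · n^{1/2 − x} → g(x) as n → ∞ (where n^{1/2−x} := exp((1/2 − x) log n)). -/
open scoped Real
open Filter Topology

/-- `g x := √π · 2^{x−1} / ( sin(πx/2) Γ(x) )`. -/
noncomputable def g (x : ℂ) : ℂ :=
  (Real.sqrt π : ℂ) * (2 : ℂ) ^ (x - 1) / (Complex.sin (π * x / 2) * Complex.Gamma x)

lemma prod_Icc_one_eq (f : ℕ → ℂ) (n : ℕ) :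
    ∏ m ∈ Finset.Icc 1 n, f m = ∏ j ∈ Finset.range n, f (j + 1) := by
  induction n with
  | zero => simp
  | succ n ih =>
      rw [Finset.prod_Icc_succ_top (Nat.le_add_left 1 n), ih, Finset.prod_range_succ]

/-- For every fixed non-integer complex `x`,
`(−1)^n G_n(x) · n^{1/2 − x} → g(x)` as `n → ∞`, where
`n^{1/2−x} := exp((1/2 − x) log n)`. -/
theorem G_asymptotic (x : ℂ) (hx : ∀ k : ℤ, x ≠ (k : ℂ)) :
    Filter.Tendsto
      (fun n : ℕ => (-1 : ℂ) ^ n * G n x *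
        Complex.exp (((1 / 2 : ℂ) - x) * (Real.log n : ℂ)))
      Filter.atTop (nhds (g x)) := by
  set s : ℂ := (x + 1) / 2 with hs_def
  set t : ℂ := 1 - x / 2 with ht_def
  have hsj : ∀ j : ℕ, s + (j : ℂ) ≠ 0 := by
    intro j h
    apply hx (-(1 + 2 * j))
    push_cast
    rw [hs_def] at h
    linear_combination 2 * h
  have htj : ∀ j : ℕ, t + (j : ℂ) ≠ 0 := by
    intro j h
    apply hx (2 + 2 * j)
    push_cast
    rw [ht_def] at h
    linear_combination -2 * h
  have hΓs : Complex.Gamma s ≠ 0 :=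
    Complex.Gamma_ne_zero fun m h => hsj m (by rw [h]; ring)
  have hΓh : Complex.Gamma (x / 2) ≠ 0 := by
    refine Complex.Gamma_ne_zero fun m h => ?_
    apply hx (-(2 * m))
    push_cast
    linear_combination 2 * h
  have hΓx : Complex.Gamma x ≠ 0 := by
    refine Complex.Gamma_ne_zero fun m h => ?_
    exact hx (-(m : ℤ)) (by push_cast; exact h)
  have hsin : Complex.sin (π * x / 2) ≠ 0 := by
    intro h
    rw [Complex.sin_eq_zero_iff] at h
    obtain ⟨k, hk⟩ := h
    have hπ : (π : ℂ) ≠ 0 := Complex.ofReal_ne_zero.mpr Real.pi_ne_zero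
    apply hx (2 * k)
    push_cast
    field_simp at hk
    -- hk : π * x = k * π * 2  (roughly)
    have := mul_left_cancel₀ hπ (by linear_combination (π : ℂ) * hk : (π : ℂ) * x = (π:ℂ) * (2 * k))
    exact this
  -- Key identity for n ≥ 1
  have key : ∀ n : ℕ, 1 ≤ n →
      (-1 : ℂ) ^ n * G n x * Complex.exp (((1 / 2 : ℂ) - x) * (Real.log n : ℂ)) =
        (Complex.GammaSeq t n / Complex.GammaSeq s n) * ((t + n) / (s + n)) := by
    intro n hn
    have hn0 : ((n : ℂ)) ≠ 0 := Nat.cast_ne_zero.mpr (by omega)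
    set A : ℂ := ∏ j ∈ Finset.range n, (s + j) with hA_def
    set B : ℂ := ∏ j ∈ Finset.range n, (t + j) with hB_def
    have hA : A ≠ 0 := Finset.prod_ne_zero_iff.mpr fun j _ => hsj j
    have hB : B ≠ 0 := Finset.prod_ne_zero_iff.mpr fun j _ => htj j
    have hprod1 : ∏ m ∈ Finset.Icc 1 n, (x + 2 * (m : ℂ) - 1) = 2 ^ n * A := by
      rw [prod_Icc_one_eq (fun m => x + 2 * (m : ℂ) - 1) n, hA_def]
      calc ∏ j ∈ Finset.range n, (x + 2 * ((j : ℕ) + 1 : ℕ) - 1 : ℂ)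
          = ∏ j ∈ Finset.range n, (2 * (s + j)) :=
            Finset.prod_congr rfl (fun j _ => by rw [hs_def]; push_cast; ring)
        _ = 2 ^ n * ∏ j ∈ Finset.range n, (s + j) := by
            rw [Finset.prod_mul_distrib, Finset.prod_const, Finset.card_range]
    have hprod2 : ∏ m ∈ Finset.Icc 1 n, (x - 2 * (m : ℂ)) = (-2) ^ n * B := by
      rw [prod_Icc_one_eq (fun m => x - 2 * (m : ℂ)) n, hB_def]
      calc ∏ j ∈ Finset.range n, (x - 2 * ((j : ℕ) + 1 : ℕ) : ℂ)
          = ∏ j ∈ Finset.range n, ((-2) * (t + j)) :=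
            Finset.prod_congr rfl (fun j _ => by rw [ht_def]; push_cast; ring)
        _ = (-2) ^ n * ∏ j ∈ Finset.range n, (t + j) := by
            rw [Finset.prod_mul_distrib, Finset.prod_const, Finset.card_range]
    have hG : G n x = 2 ^ n * A / ((-2) ^ n * B) := by
      rw [G, Finset.prod_div_distrib, hprod1, hprod2]
    have hexp : Complex.exp (((1 / 2 : ℂ) - x) * (Real.log n : ℂ)) =
        (n : ℂ) ^ t / (n : ℂ) ^ s := by
      rw [Complex.cpow_def_of_ne_zero hn0, Complex.cpow_def_of_ne_zero hn0,
        ← Complex.exp_sub]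
      congr 1
      have hlog : Complex.log (n : ℂ) = (Real.log n : ℂ) := by
        rw [← Complex.ofReal_natCast, ← Complex.ofReal_log (Nat.cast_nonneg n)]
      rw [hlog, hs_def, ht_def]
      ring
    have hnt : (n : ℂ) ^ t ≠ 0 := by
      rw [Complex.cpow_def_of_ne_zero hn0]; exact Complex.exp_ne_zero _
    have hns : (n : ℂ) ^ s ≠ 0 := by
      rw [Complex.cpow_def_of_ne_zero hn0]; exact Complex.exp_ne_zero _
    have hfac : ((n.factorial : ℕ) : ℂ) ≠ 0 := Nat.cast_ne_zero.mpr n.factorial_ne_zero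
    have hGt : Complex.GammaSeq t n = (n : ℂ) ^ t * (n.factorial : ℂ) / (B * (t + n)) := by
      rw [Complex.GammaSeq, Finset.prod_range_succ, hB_def]
    have hGs : Complex.GammaSeq s n = (n : ℂ) ^ s * (n.factorial : ℂ) / (A * (s + n)) := by
      rw [Complex.GammaSeq, Finset.prod_range_succ, hA_def]
    have hG2 : (-1 : ℂ) ^ n * G n x = A / B := by
      rw [hG, show ((-2 : ℂ)) ^ n = (-1) ^ n * 2 ^ n by rw [← neg_one_mul, mul_pow]]
      have h1 : ((-1 : ℂ)) ^ n ≠ 0 := pow_ne_zero _ (by norm_num)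
      have h2 : ((2 : ℂ)) ^ n ≠ 0 := pow_ne_zero _ two_ne_zero
      field_simp
    rw [hG2, hexp, hGt, hGs]
    have hsn := hsj n
    have htn := htj n
    field_simp
  -- correction factor tends to 1
  have hinv : Filter.Tendsto (fun n : ℕ => ((s + n : ℂ))⁻¹) Filter.atTop (nhds 0) := by
    have hnrm : Filter.Tendsto (fun n : ℕ => ‖(s + n : ℂ)‖) Filter.atTop Filter.atTop := by
      refine tendsto_atTop_mono (fun n => ?_)
        (tendsto_atTop_add_const_right _ (-‖s‖) tendsto_natCast_atTop_atTop)
      have h := norm_sub_norm_le ((n : ℂ)) (-s)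
      simp only [sub_neg_eq_add, norm_neg] at h
      calc (n : ℝ) + -‖s‖ = ‖(n : ℂ)‖ - ‖s‖ := by
            rw [Complex.norm_natCast]; ring
        _ ≤ ‖(n : ℂ) + s‖ := h
        _ = ‖s + (n : ℂ)‖ := by rw [add_comm]
    rw [tendsto_zero_iff_norm_tendsto_zero]
    simpa [norm_inv, Pi.inv_def] using hnrm.inv_tendsto_atTop
  have hcorr : Filter.Tendsto (fun n : ℕ => ((t + n) / (s + n) : ℂ)) Filter.atTop (nhds 1) := by
    have h2 : Filter.Tendsto (fun n : ℕ => (1 : ℂ) + (t - s) * (s + n)⁻¹)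
        Filter.atTop (nhds 1) := by
      simpa using tendsto_const_nhds.add (tendsto_const_nhds.mul hinv)
    refine h2.congr fun n => ?_
    have hsn := hsj n
    field_simp
    ring
  have hR : Filter.Tendsto (fun n : ℕ => Complex.GammaSeq t n / Complex.GammaSeq s n)
      Filter.atTop (nhds (Complex.Gamma t / Complex.Gamma s)) :=
    (Complex.GammaSeq_tendsto_Gamma t).div (Complex.GammaSeq_tendsto_Gamma s) hΓs
  have hlim : Filter.Tendsto (fun n : ℕ => (Complex.GammaSeq t n / Complex.GammaSeq s n)
      * ((t + n) / (s + n))) Filter.atTop (nhds (Complex.Gamma t / Complex.Gamma s)) := by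
    simpa using hR.mul hcorr
  -- identify the limit with g x
  have hEq : g x = Complex.Gamma t / Complex.Gamma s := by
    have hrefl := Complex.Gamma_mul_Gamma_one_sub (x / 2)
    rw [← mul_div_assoc] at hrefl
    rw [← ht_def] at hrefl
    rw [eq_div_iff hsin] at hrefl
    have dup := Complex.Gamma_mul_Gamma_add_half (x / 2)
    have e1 : 2 * (x / 2) = x := by ring
    rw [e1] at dup
    have es : s = x / 2 + 1 / 2 := by rw [hs_def]; ring
    rw [← es] at dup
    have hππ : ((Real.sqrt π : ℝ) : ℂ) * ((Real.sqrt π : ℝ) : ℂ) = ((π : ℝ) : ℂ) := by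
      rw [← Complex.ofReal_mul, Real.mul_self_sqrt Real.pi_nonneg]
    have h22 : (2 : ℂ) ^ (x - 1) * (2 : ℂ) ^ (1 - x) = 1 := by
      rw [← Complex.cpow_add _ _ two_ne_zero]
      norm_num
    have hsqrt : ((Real.sqrt π : ℝ) : ℂ) ≠ 0 :=
      Complex.ofReal_ne_zero.mpr (Real.sqrt_ne_zero'.mpr Real.pi_pos)
    have h2p : (2 : ℂ) ^ (1 - x) ≠ 0 := by
      intro h
      rw [h, mul_zero] at h22
      exact one_ne_zero h22.symm
    rw [g, div_eq_div_iff (mul_ne_zero hsin hΓx) hΓs]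
    apply mul_left_cancel₀ (mul_ne_zero hΓh h2p)
    linear_combination ((2 : ℂ) ^ (1 - x) * ((Real.sqrt π : ℝ) : ℂ) * (2 : ℂ) ^ (x - 1)) * dup
      - (Complex.Gamma x * (2 : ℂ) ^ (1 - x)) * hrefl
      + (Complex.Gamma x * (2 : ℂ) ^ (1 - x) * ((Real.sqrt π : ℝ) : ℂ)
          * ((Real.sqrt π : ℝ) : ℂ)) * h22
      + (Complex.Gamma x * (2 : ℂ) ^ (1 - x)) * hππ
  rw [hEq]
  refine Filter.Tendsto.congr' ?_ hlim
  filter_upwards [Filter.eventually_ge_atTop 1] with n hn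
  exact (key n hn).symm
end
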